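/- arXiv:1903.03218 — 3 statements merged into one kernel-verified Lean document; each statement's English description precedes it below -/
import Mathlib

section
/- Let n ≥ 1 and define btw on ZMod n (a ring of n elements thought of cyclically) by btw(x,y,z) iff, identifying elements with representatives in {0,…,n−1}, (x<y<z) ∨ (y<z<x) ∨ (z<x<y). Then for any a,b ∈ ZMod n with n ≥ 3, we have (∀x, x≠a ∧ x≠b → btw(a,b,x)) iff b = a+1. -/
/-!
Walking around the cycle from `a`, the first element met is `a + 1`: hence `btw(a, b, a + 1)`
never holds, while every `x ∉ {a, a + 1}` lies on the arc from `a + 1` back to `a`. Both facts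
reduce to the two possible values of `(a + 1).val`, namely `a.val + 1`, or `0` when `a` is the
last element.
-/

def btwZ (n : ℕ) (x y z : ZMod n) : Prop :=
  (x.val < y.val ∧ y.val < z.val) ∨ (y.val < z.val ∧ z.val < x.val) ∨
    (z.val < x.val ∧ x.val < y.val)

namespace ZMod

variable {n : ℕ} [NeZero n]

theorem val_add_one_cases (a : ZMod n) :
    (a + 1).val = a.val + 1 ∧ a.val + 1 < n ∨ (a + 1).val = 0 ∧ a.val + 1 = n := by
  have hval : (a + 1).val = (a.val + 1) % n := by
    rw [← val_natCast, Nat.cast_add, natCast_zmod_val, Nat.cast_one]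
  rcases (show a.val + 1 ≤ n from a.val_lt).lt_or_eq with hlt | heq
  · exact Or.inl ⟨hval.trans (Nat.mod_eq_of_lt hlt), hlt⟩
  · exact Or.inr ⟨by rw [hval, heq, Nat.mod_self], heq⟩

theorem not_btwZ_add_one (a b : ZMod n) : ¬ btwZ n a b (a + 1) := by
  have hb := b.val_lt
  unfold btwZ
  rcases val_add_one_cases a with ⟨h, _⟩ | ⟨h, _⟩ <;> rw [h] <;> omega

theorem btwZ_add_one {a x : ZMod n} (hxa : x ≠ a) (hxa' : x ≠ a + 1) :
    btwZ n a (a + 1) x := by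
  have h₁ := (val_injective n).ne hxa
  have h₂ := (val_injective n).ne hxa'
  have hx := x.val_lt
  unfold btwZ
  rcases val_add_one_cases a with ⟨h, _⟩ | ⟨h, _⟩ <;> rw [h] at h₂ ⊢ <;> omega

end ZMod

theorem next_iff_succ (n : ℕ) (hn : 3 ≤ n) (a b : ZMod n) :
    (∀ x : ZMod n, x ≠ a ∧ x ≠ b → btwZ n a b x) ↔ b = a + 1 := by
  have : Fact (1 < n) := ⟨by omega⟩
  constructor
  · intro h
    by_contra hb
    exact ZMod.not_btwZ_add_one a b (h (a + 1) ⟨by simp, Ne.symm hb⟩)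
  · rintro rfl x ⟨hxa, hxa'⟩
    exact ZMod.btwZ_add_one hxa hxa'
end

section
/- Uncompletability of the leader election invariant: there is no function id : ZMod 3 → ℕ and comp : ZMod 3 → ℕ with id(0) = 1, comp(0) = 0, id(2) = 2, comp(2) = 1, such that for all x,y,z with btw(x,y,z) (the cyclic between relation on ZMod 3): id(x), id(y), id(z) are pairwise distinct, 0 < id(x), and (id(y) = comp(x) → id(z) ≤ id(y)). -/
theorem btwZ.rotate {n : ℕ} {x y z : ZMod n} (h : btwZ n x y z) : btwZ n y z x := by
  unfold btwZ at h ⊢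
  tauto

theorem btwZ_zero_one_two : btwZ 3 0 1 2 :=
  Or.inl ⟨by decide, by decide⟩

theorem leader_inv_uncompletable :
    ¬ ∃ (id comp : ZMod 3 → ℕ),
        id 0 = 1 ∧ comp 0 = 0 ∧ id 2 = 2 ∧ comp 2 = 1 ∧
        ∀ x y z : ZMod 3, btwZ 3 x y z →
          (id x ≠ id y ∧ id y ≠ id z ∧ id x ≠ id z) ∧
          0 < id x ∧
          (id y = comp x → id z ≤ id y) := by
  rintro ⟨id, comp, h0, -, -, hc2, h⟩
  have hne : id 0 ≠ id 1 := (h 0 1 2 btwZ_zero_one_two).1.1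
  have hpos : 0 < id 1 := (h 1 2 0 btwZ_zero_one_two.rotate).2.1
  have hle : id 1 ≤ id 0 := (h 2 0 1 btwZ_zero_one_two.rotate.rotate).2.2 (by rw [h0, hc2])
  omega
end

section
/- Leader election safety: under the hypotheses that id : ZMod n → ℕ (n ≥ 3) is injective with positive values, comp is initially identically 0, and transitions update comp(p+1) := max(id(p), comp(p)) for a nondeterministically chosen p (leaving everything else unchanged), every reachable state satisfies: there do not exist x,y,z with btw(x,y,z), id(x)=comp(x), and id(y)=comp(y). -/
/-- One leader-election step: some process `p` sends `max (id p) (comp p)`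
to its successor; everything else is unchanged. -/
def LeaderStep (n : ℕ) (id : ZMod n → ℕ) (comp comp' : ZMod n → ℕ) : Prop :=
  ∃ p : ZMod n, comp' (p + 1) = max (id p) (comp p) ∧
    ∀ q, q ≠ p + 1 → comp' q = comp q

lemma not_btwZ_self_left {n : ℕ} {x z : ZMod n} : ¬ btwZ n x x z := by
  unfold btwZ; omega

def LeaderInvariant (n : ℕ) (id comp : ZMod n → ℕ) : Prop :=
  ∀ (v : ZMod n) (k : ℕ), k ≤ n → comp (v + k) = id v → ∀ j < k, id (v + j) ≤ id v

namespace LeaderInvariant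

variable {n : ℕ} {id comp comp' : ZMod n → ℕ}

lemma init (hpos : ∀ x, 0 < id x) : LeaderInvariant n id (fun _ => 0) :=
  fun v _ _ hv => absurd hv.symm (hpos v).ne'

lemma step (hinj : Function.Injective id) (h : LeaderInvariant n id comp)
    (hstep : LeaderStep n id comp comp') : LeaderInvariant n id comp' := by
  obtain ⟨p, hsend, hkeep⟩ := hstep
  intro v k hk hv j hj
  obtain hdest | hdest := ne_or_eq (v + k) (p + 1)
  · exact h v k hk (by rwa [← hkeep _ hdest]) j hj
  obtain _ | k := k
  · omega
  have hp : v + k = p := by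
    rw [Nat.cast_succ, ← add_assoc] at hdest
    exact add_right_cancel hdest
  rw [hdest, hsend] at hv
  rcases max_choice (id p) (comp p) with hmax | hmax
  · -- `p` started a new message, so `p = v` and the message has not moved yet
    have hpv : p = v := hinj (hv ▸ hmax.symm)
    have hk0 : k = 0 := by
      rw [hpv, add_eq_left, ZMod.natCast_eq_zero_iff] at hp
      exact Nat.eq_zero_of_dvd_of_lt hp (by omega)
    obtain rfl : j = 0 := by omega
    simp
  · rcases Nat.lt_succ_iff_lt_or_eq.mp hj with hj | rfl
    · exact h v k (by omega) (by rw [hp, ← hmax, hv]) j hj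
    · rw [hp, ← hv]
      exact le_max_left _ _

lemma of_reflTransGen (hinj : Function.Injective id) (hpos : ∀ x, 0 < id x)
    (hreach : Relation.ReflTransGen (LeaderStep n id) (fun _ => 0) comp) :
    LeaderInvariant n id comp := by
  induction hreach with
  | refl => exact init hpos
  | tail _ hstep ih => exact ih.step hinj hstep

lemma le_of_leader [NeZero n] (h : LeaderInvariant n id comp) {x : ZMod n}
    (hx : id x = comp x) (y : ZMod n) : id y ≤ id x := by
  have hround := h x n le_rfl (by rw [ZMod.natCast_self, add_zero, hx]) (y - x).val (ZMod.val_lt _)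
  rwa [ZMod.natCast_zmod_val, add_sub_cancel] at hround

lemma eq_of_leaders [NeZero n] (hinj : Function.Injective id) (h : LeaderInvariant n id comp)
    {x y : ZMod n} (hx : id x = comp x) (hy : id y = comp y) : x = y :=
  hinj (le_antisymm (h.le_of_leader hy x) (h.le_of_leader hx y))

end LeaderInvariant

theorem leader_election_safety (n : ℕ) (hn : 3 ≤ n)
    (id : ZMod n → ℕ)
    (hinj : Function.Injective id) (hpos : ∀ x, 0 < id x) :
    ∀ comp : ZMod n → ℕ,
      Relation.ReflTransGen (LeaderStep n id) (fun _ => 0) comp →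
      ¬ ∃ x y z : ZMod n, btwZ n x y z ∧ id x = comp x ∧ id y = comp y := by
  have : NeZero n := ⟨by omega⟩
  rintro comp hreach ⟨x, y, z, hbtw, hx, hy⟩
  obtain rfl := (LeaderInvariant.of_reflTransGen hinj hpos hreach).eq_of_leaders hinj hx hy
  exact not_btwZ_self_left hbtw
end
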